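/- Let y ∈ ℝ, y ≠ 0, and w ∈ ℂ with w² = y. For s > 0 set W₁ = φ2(−√s), W₂ = W₁·φ3(−√s), W₃ = W₂·φ2(√s), W₄ = W₃·φ3(√s), and let R(s) = Ω_y(W₁, φ3(−√s)) + Ω_y(W₂, φ2(√s)) + Ω_y(W₃, φ3(√s)). Then (1/s)·R(s) tends to 2 as s → 0 along positive real values. (This is the computation showing the central component of [J2,J3] in the extension is 2J0.) -/

import Mathlib

/-!
With `c = cos (w√s)` and `σ = sin (w√s)`, each quotient `a(gh)/(a(g)a(h))` in `R(s)` has the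
form `1 + σ² q` where `q` tends to `i`, `1 + i` and `1` respectively, while `σ²/s → w² = y`.
Since `arg z = Im (log z)` and `log z = (z - 1) + o(z - 1)` near `1`, the three terms of `R(s)/s`
tend to `Im (i y) / y = 1`, `Im ((1 + i) y) / y = 1` and `Im y / y = 0`.
-/

open Complex Matrix Filter

noncomputable section

abbrev M2 : Type := Matrix (Fin 2) (Fin 2) ℂ

/-- `φ2(t) = !![cos(wt), w⁻¹ sin(wt); −w sin(wt), cos(wt)]`. -/
def phi2 (w : ℂ) (t : ℝ) : M2 :=
  !![Complex.cos (w * t), w⁻¹ * Complex.sin (w * t);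
     -w * Complex.sin (w * t), Complex.cos (w * t)]

/-- `φ3(t) = !![cos(wt), i w⁻¹ sin(wt); i w sin(wt), cos(wt)]`. -/
def phi3 (w : ℂ) (t : ℝ) : M2 :=
  !![Complex.cos (w * t), Complex.I * w⁻¹ * Complex.sin (w * t);
     Complex.I * w * Complex.sin (w * t), Complex.cos (w * t)]

/-- `Ω_y(g,h) = (1/y)·Arg(a(gh)/(a(g)a(h)))`. -/
def Omega (y : ℝ) (g h : M2) : ℝ :=
  (1 / y) * Complex.arg ((g * h) 0 0 / (g 0 0 * h 0 0))

open Asymptotics Topology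

theorem Complex.tendsto_log_div_of_tendsto_sub_one_div {α : Type*} {l : Filter α}
    {r ε : α → ℂ} {L : ℂ} (hε : Tendsto ε l (𝓝 0)) (hε0 : ∀ᶠ x in l, ε x ≠ 0)
    (h : Tendsto (fun x => (r x - 1) / ε x) l (𝓝 L)) :
    Tendsto (fun x => log (r x) / ε x) l (𝓝 L) := by
  have hr : Tendsto r l (𝓝 1) := by
    have := (h.mul hε).add_const 1
    rw [mul_zero, zero_add] at this
    refine this.congr' ?_
    filter_upwards [hε0] with x hx
    rw [div_mul_cancel₀ _ hx, sub_add_cancel]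
  have hlog : (fun z => log z - log 1 - (z - 1) • (1 : ℂ)⁻¹) =o[𝓝 1] fun z => z - 1 :=
    hasDerivAt_iff_isLittleO.1 (hasStrictDerivAt_log one_mem_slitPlane).hasDerivAt
  have hbig : (fun x => r x - 1) =O[l] ε := by
    have := (h.isBigO_one ℂ).mul (isBigO_refl ε l)
    simp only [one_mul] at this
    refine this.congr' ?_ EventuallyEq.rfl
    filter_upwards [hε0] with x hx
    exact div_mul_cancel₀ _ hx
  have hsmall : (fun x => log (r x) - (r x - 1)) =o[l] ε := by
    simpa [Function.comp_def] using (hlog.comp_tendsto hr).trans_isBigO hbig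
  simpa [sub_div] using h.add hsmall.tendsto_div_nhds_zero

theorem Complex.tendsto_arg_div_of_tendsto_sub_one_div {α : Type*} {l : Filter α}
    {r : α → ℂ} {ε : α → ℝ} {L : ℂ} (hε : Tendsto ε l (𝓝 0)) (hε0 : ∀ᶠ x in l, ε x ≠ 0)
    (h : Tendsto (fun x => (r x - 1) / ε x) l (𝓝 L)) :
    Tendsto (fun x => arg (r x) / ε x) l (𝓝 L.im) := by
  have hlog := tendsto_log_div_of_tendsto_sub_one_div (ofReal_zero ▸ hε.ofReal)
    (hε0.mono fun x hx => ofReal_ne_zero.2 hx) h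
  simpa [Function.comp_def, div_ofReal_im, log_im] using (continuous_im.tendsto L).comp hlog

theorem Complex.tendsto_sin_mul_sqrt_sq_div (w : ℂ) :
    Tendsto (fun s : ℝ => sin (w * √s) ^ 2 / s) (𝓝[>] 0) (𝓝 (w ^ 2)) := by
  rcases eq_or_ne w 0 with rfl | hw
  · simp
  have hz : Tendsto (fun s : ℝ => w * √s) (𝓝[>] 0) (𝓝[≠] 0) := by
    refine tendsto_nhdsWithin_of_tendsto_nhds_of_eventually_within _ ?_ ?_
    · have := ((continuous_ofReal.comp Real.continuous_sqrt).const_mul w).tendsto 0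
      simpa using this.mono_left nhdsWithin_le_nhds
    · filter_upwards [self_mem_nhdsWithin] with s hs
      exact mul_ne_zero hw (ofReal_ne_zero.2 (Real.sqrt_ne_zero'.2 hs))
  have hsinc := ((hasDerivAt_sin 0).tendsto_slope_zero.comp hz).pow 2 |>.mul_const (w ^ 2)
  simp only [cos_zero, one_pow, one_mul, zero_add, sin_zero, sub_zero, smul_eq_mul] at hsinc
  refine hsinc.congr' ?_
  filter_upwards [self_mem_nhdsWithin] with s hs
  have hs : (0 : ℝ) < s := hs
  have hsq : ((√s : ℝ) : ℂ) ^ 2 = s := by rw [← ofReal_pow, Real.sq_sqrt hs.le]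
  simp only [Function.comp_apply]
  field_simp
  rw [hsq]

section Entries

variable {w : ℂ} (t : ℝ)

@[simp] theorem phi2_zero_zero : phi2 w t 0 0 = cos (w * t) := rfl

@[simp] theorem phi3_zero_zero : phi3 w t 0 0 = cos (w * t) := rfl

variable (hw : w ≠ 0)
include hw

theorem phi2_mul_phi3_zero_zero :
    (phi2 w (-t) * phi3 w (-t)) 0 0 = cos (w * t) ^ 2 + I * sin (w * t) ^ 2 := by
  simp only [phi2, phi3, Matrix.mul_apply, Fin.sum_univ_two, of_apply, cons_val', cons_val_zero,
    cons_val_one, cons_val_fin_one, ofReal_neg, mul_neg, neg_mul, neg_neg, cos_neg, sin_neg]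
  field_simp

theorem phi2_mul_phi3_mul_phi2_zero_zero :
    (phi2 w (-t) * phi3 w (-t) * phi2 w t) 0 0 =
      cos (w * t) * (cos (w * t) ^ 2 + sin (w * t) ^ 2 + 2 * I * sin (w * t) ^ 2) := by
  simp only [phi2, phi3, Matrix.mul_apply, Fin.sum_univ_two, of_apply, cons_val', cons_val_zero,
    cons_val_one, cons_val_fin_one, ofReal_neg, mul_neg, neg_mul, neg_neg, cos_neg, sin_neg]
  field_simp
  ring

theorem phi2_mul_phi3_mul_phi2_mul_phi3_zero_zero :
    (phi2 w (-t) * phi3 w (-t) * phi2 w t * phi3 w t) 0 0 =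
      cos (w * t) ^ 4 + 2 * cos (w * t) ^ 2 * sin (w * t) ^ 2 - sin (w * t) ^ 4
        + 2 * I * cos (w * t) ^ 2 * sin (w * t) ^ 2 := by
  simp only [phi2, phi3, Matrix.mul_apply, Fin.sum_univ_two, of_apply, cons_val', cons_val_zero,
    cons_val_one, cons_val_fin_one, ofReal_neg, mul_neg, neg_mul, neg_neg, cos_neg, sin_neg]
  field_simp
  linear_combination (sin (w * t) ^ 4 - cos (w * t) ^ 2 * sin (w * t) ^ 2) * I_sq

end Entries

-- `c`, `σ` stand for `cos (w√s)`, `sin (w√s)`: see `phi2_mul_phi3_zero_zero` and its companions.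
section Ratios

variable {α : Type*} {l : Filter α} {c σ ε : α → ℂ} {L : ℂ}
  (hc : Tendsto c l (𝓝 1)) (hσ : Tendsto σ l (𝓝 0))
  (hσε : Tendsto (fun x => σ x ^ 2 / ε x) l (𝓝 L))
include hc hσε

theorem tendsto_ratio_W1_sub_one_div :
    Tendsto (fun x => ((c x ^ 2 + I * σ x ^ 2) / (c x * c x) - 1) / ε x) l (𝓝 (L * I)) := by
  have hq : Tendsto (fun x => I / c x ^ 2) l (𝓝 I) := by
    simpa [Pi.div_def] using tendsto_const_nhds.div (hc.pow 2) (by simp)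
  refine (hσε.mul hq).congr' ?_
  filter_upwards [hc.eventually_ne one_ne_zero] with x hx
  rw [show (c x ^ 2 + I * σ x ^ 2) / (c x * c x) - 1 = σ x ^ 2 * (I / c x ^ 2) by
    field_simp; ring]
  ring

include hσ

theorem tendsto_ratio_W2_sub_one_div :
    Tendsto (fun x => (c x * (c x ^ 2 + σ x ^ 2 + 2 * I * σ x ^ 2)
      / ((c x ^ 2 + I * σ x ^ 2) * c x) - 1) / ε x) l (𝓝 (L * (1 + I))) := by
  have hden : Tendsto (fun x => c x ^ 2 + I * σ x ^ 2) l (𝓝 1) := by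
    simpa using (hc.pow 2).add ((hσ.pow 2).const_mul I)
  have hq : Tendsto (fun x => (1 + I) / (c x ^ 2 + I * σ x ^ 2)) l (𝓝 (1 + I)) := by
    simpa [Pi.div_def] using tendsto_const_nhds.div hden one_ne_zero
  refine (hσε.mul hq).congr' ?_
  filter_upwards [hc.eventually_ne one_ne_zero, hden.eventually_ne one_ne_zero] with x hc0 hden0
  rw [show c x * (c x ^ 2 + σ x ^ 2 + 2 * I * σ x ^ 2) / ((c x ^ 2 + I * σ x ^ 2) * c x) - 1
      = σ x ^ 2 * ((1 + I) / (c x ^ 2 + I * σ x ^ 2)) by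
    rw [div_sub_one (by positivity), mul_div_assoc', div_eq_div_iff (by positivity) hden0]
    ring]
  ring

theorem tendsto_ratio_W3_sub_one_div :
    Tendsto (fun x => ((c x ^ 4 + 2 * c x ^ 2 * σ x ^ 2 - σ x ^ 4 + 2 * I * c x ^ 2 * σ x ^ 2)
      / (c x * (c x ^ 2 + σ x ^ 2 + 2 * I * σ x ^ 2) * c x) - 1) / ε x) l (𝓝 L) := by
  have hden : Tendsto (fun x => c x ^ 2 + σ x ^ 2 + 2 * I * σ x ^ 2) l (𝓝 1) := by
    simpa using ((hc.pow 2).add (hσ.pow 2)).add ((hσ.pow 2).const_mul (2 * I))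
  have hq : Tendsto
      (fun x => (c x ^ 2 - σ x ^ 2) / (c x ^ 2 * (c x ^ 2 + σ x ^ 2 + 2 * I * σ x ^ 2))) l (𝓝 1) := by
    simpa [Pi.div_def] using ((hc.pow 2).sub (hσ.pow 2)).div ((hc.pow 2).mul hden) (by simp)
  refine (mul_one L ▸ hσε.mul hq).congr' ?_
  filter_upwards [hc.eventually_ne one_ne_zero, hden.eventually_ne one_ne_zero] with x hc0 hden0
  rw [show (c x ^ 4 + 2 * c x ^ 2 * σ x ^ 2 - σ x ^ 4 + 2 * I * c x ^ 2 * σ x ^ 2)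
      / (c x * (c x ^ 2 + σ x ^ 2 + 2 * I * σ x ^ 2) * c x) - 1
      = σ x ^ 2 * ((c x ^ 2 - σ x ^ 2) / (c x ^ 2 * (c x ^ 2 + σ x ^ 2 + 2 * I * σ x ^ 2))) by
    rw [div_sub_one (by positivity), mul_div_assoc', div_eq_div_iff (by positivity) (by positivity)]
    ring]
  ring

end Ratios

/-- for `y ≠ 0`, `w² = y`, with `W₁ = φ2(−√s)`, `W₂ = W₁ φ3(−√s)`,
`W₃ = W₂ φ2(√s)` and `R(s) = Ω_y(W₁,φ3(−√s)) + Ω_y(W₂,φ2(√s)) + Ω_y(W₃,φ3(√s))`, one has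
`(1/s)·R(s) → 2` as `s → 0⁺`; this shows the central component of `[J2,J3]` is `2J0`. -/
theorem statement16 (y : ℝ) (hy : y ≠ 0) (w : ℂ) (hw : w ^ 2 = (y : ℂ)) :
    Tendsto
      (fun s : ℝ =>
        (1 / s) *
          (Omega y (phi2 w (-Real.sqrt s)) (phi3 w (-Real.sqrt s))
            + Omega y (phi2 w (-Real.sqrt s) * phi3 w (-Real.sqrt s))
                (phi2 w (Real.sqrt s))
            + Omega y (phi2 w (-Real.sqrt s) * phi3 w (-Real.sqrt s)
                * phi2 w (Real.sqrt s)) (phi3 w (Real.sqrt s))))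
      (nhdsWithin 0 (Set.Ioi (0 : ℝ)))
      (nhds 2) := by
  have hw0 : w ≠ 0 := by
    rintro rfl
    exact hy (by exact_mod_cast hw.symm.trans (zero_pow two_ne_zero))
  have hs : Tendsto (fun s : ℝ => s) (𝓝[>] 0) (𝓝 0) := nhdsWithin_le_nhds
  have hs0 : ∀ᶠ s : ℝ in 𝓝[>] 0, s ≠ 0 := eventually_mem_nhdsWithin.mono fun s hs => hs.ne'
  have hwt : Tendsto (fun s : ℝ => w * √s) (𝓝[>] 0) (𝓝 0) := by
    simpa using (((continuous_ofReal.comp Real.continuous_sqrt).const_mul w).tendsto 0).mono_left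
      nhdsWithin_le_nhds
  have hc : Tendsto (fun s : ℝ => cos (w * √s)) (𝓝[>] 0) (𝓝 1) := by
    simpa [Function.comp_def] using (continuous_cos.tendsto 0).comp hwt
  have hσ : Tendsto (fun s : ℝ => sin (w * √s)) (𝓝[>] 0) (𝓝 0) := by
    simpa [Function.comp_def] using (continuous_sin.tendsto 0).comp hwt
  have hσs := hw ▸ tendsto_sin_mul_sqrt_sq_div w
  have h1 := tendsto_arg_div_of_tendsto_sub_one_div hs hs0 (tendsto_ratio_W1_sub_one_div hc hσs)
  have h2 := tendsto_arg_div_of_tendsto_sub_one_div hs hs0 (tendsto_ratio_W2_sub_one_div hc hσ hσs)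
  have h3 := tendsto_arg_div_of_tendsto_sub_one_div hs hs0 (tendsto_ratio_W3_sub_one_div hc hσ hσs)
  have hval : 1 / y * (((y : ℂ) * I).im + ((y : ℂ) * (1 + I)).im + (y : ℂ).im) = 2 := by
    simp only [mul_im, add_im, ofReal_re, ofReal_im, I_re, I_im, one_im]
    field_simp
    ring
  refine (hval ▸ ((h1.add h2).add h3).const_mul (1 / y)).congr fun s => ?_
  simp only [Omega, phi2_mul_phi3_zero_zero _ hw0, phi2_mul_phi3_mul_phi2_zero_zero _ hw0,
    phi2_mul_phi3_mul_phi2_mul_phi3_zero_zero _ hw0, phi2_zero_zero, phi3_zero_zero,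
    ofReal_neg, mul_neg, cos_neg]
  ring
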